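/- Let n ≥ 1 and let 𝒪 ⊆ ℕ^n be a finite nonempty order ideal with bounding box B = {α ∈ ℕ^n : α_i ≤ m_i for all i}, where m_i = max{α_i : α ∈ 𝒪}. For u in the closed border ∂̄B = B ∪ ∂B = {α ∈ ℕ^n : α_i ≤ m_i + 1 for all i}, let f(u) = {i ∈ [n] : u + e_i ∉ ∂̄B} = {i ∈ [n] : u_i = m_i + 1}. Then in ℚ[[y_1, …, y_n]]: Σ_{α ∈ ℕ^n} ind_𝒪(α) y^α = Σ_{u ∈ ∂̄B} y^u · Σ_{β ∈ ℕ^{f(u)}} (ind_𝒪(u) + |β|) y^β, where ℕ^{f(u)} = {β ∈ ℕ^n : β_i = 0 for i ∉ f(u)}. -/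

import Mathlib

/-- An order ideal in ℕ^n: a set of exponent vectors closed under componentwise division. -/
def IsOrderIdeal {n : ℕ} (O : Set (Fin n →₀ ℕ)) : Prop :=
  ∀ α ∈ O, ∀ β : Fin n →₀ ℕ, β ≤ α → β ∈ O

/-- The border of a set `C ⊆ ℕ^n`: `∂C = {α + e_i : α ∈ C, i} \ C`. -/
def border {n : ℕ} (C : Set (Fin n →₀ ℕ)) : Set (Fin n →₀ ℕ) :=
  {γ | ∃ α ∈ C, ∃ i : Fin n, γ = α + Finsupp.single i 1} \ C

/-- The closed higher borders: `∂̄⁰O = O`, `∂̄ᵏO = ∂(∂̄ᵏ⁻¹O) ∪ ∂̄ᵏ⁻¹O`. -/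
def closedBorder {n : ℕ} (O : Set (Fin n →₀ ℕ)) : ℕ → Set (Fin n →₀ ℕ)
  | 0 => O
  | k + 1 => border (closedBorder O k) ∪ closedBorder O k

/-- The higher borders: `∂⁰O = O`, `∂ᵏO = ∂(∂̄ᵏ⁻¹O)`. -/
def borderIter {n : ℕ} (O : Set (Fin n →₀ ℕ)) : ℕ → Set (Fin n →₀ ℕ)
  | 0 => O
  | k + 1 => border (closedBorder O k)

/-- The index of `α` relative to `O`: the minimal `k` with `α ∈ ∂̄ᵏO`. -/
noncomputable def ind {n : ℕ} (O : Set (Fin n →₀ ℕ)) (α : Fin n →₀ ℕ) : ℕ :=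
  sInf {k | α ∈ closedBorder O k}

/-- Total degree of an exponent vector. -/
def deg {n : ℕ} (α : Fin n →₀ ℕ) : ℕ := ∑ i, α i

/-- The multivariate formal power series with prescribed coefficients. -/
noncomputable def seriesOfCoeff {n : ℕ} (f : (Fin n →₀ ℕ) → ℚ) : MvPowerSeries (Fin n) ℚ := f

/-- `ℕ^S`: exponent vectors supported inside `S`. -/
def NS {n : ℕ} (S : Set (Fin n)) : Set (Fin n →₀ ℕ) := {β | ∀ i ∉ S, β i = 0}

/-!
By induction on `k`, `∂̄ᵏO` consists of the points `β + γ` with `β ∈ O` and `|γ| ≤ k`, so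
`ind_O(α)` is the least `|α - β|` over `β ∈ O` below `α`. Every point of `O` lies in the box
`{β ≤ M}`, hence every such `β` already lies below `u = α ⊓ M`, the point of `∂̄B` nearest to `α`,
and `ind_O(α) = ind_O(u) + |α - u|`. On the right-hand side only `u = α ⊓ M` contributes to the
coefficient of `y^α`: for `u ≤ M`, the conditions `u ≤ α` and `α - u ∈ ℕ^{f(u)}` force
`u = α ⊓ M`.
-/

lemma deg_eq_degree {n : ℕ} (α : Fin n →₀ ℕ) : deg α = α.degree :=
  (Finsupp.degree_eq_sum α).symm

lemma Finsupp.exists_eq_add_single_one {σ : Type*} {γ : σ →₀ ℕ} (hγ : γ ≠ 0) :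
    ∃ γ' i, γ = γ' + Finsupp.single i 1 := by
  obtain ⟨i, hi⟩ := Finsupp.ne_iff.mp hγ
  refine ⟨γ - Finsupp.single i 1, i, (tsub_add_cancel_of_le ?_).symm⟩
  exact Finsupp.single_le_iff.mpr (Nat.one_le_iff_ne_zero.mpr hi)

section ClosedBorder

variable {n : ℕ} {O : Set (Fin n →₀ ℕ)}

lemma closedBorder_mono : Monotone (closedBorder O) :=
  monotone_nat_of_le_succ fun _ => Set.subset_union_right

lemma mem_closedBorder_iff {k : ℕ} {α : Fin n →₀ ℕ} :
    α ∈ closedBorder O k ↔ ∃ β ∈ O, ∃ γ, α = β + γ ∧ γ.degree ≤ k := by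
  induction k generalizing α with
  | zero =>
    simp only [closedBorder, Nat.le_zero, Finsupp.degree_eq_zero_iff]
    exact ⟨fun h => ⟨α, h, 0, (add_zero α).symm, rfl⟩, by rintro ⟨β, hβ, _, rfl, rfl⟩; simpa⟩
  | succ k ih =>
    constructor
    · rintro (⟨⟨δ, hδ, i, rfl⟩, -⟩ | h)
      · obtain ⟨β, hβ, γ, rfl, hγ⟩ := ih.mp hδ
        refine ⟨β, hβ, γ + Finsupp.single i 1, (add_assoc _ _ _), ?_⟩
        simpa [map_add] using hγ
      · obtain ⟨β, hβ, γ, rfl, hγ⟩ := ih.mp h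
        exact ⟨β, hβ, γ, rfl, hγ.trans k.le_succ⟩
    · rintro ⟨β, hβ, γ, rfl, hγ⟩
      by_cases hk : β + γ ∈ closedBorder O k
      · exact Or.inr hk
      have hγ0 : γ ≠ 0 := by
        rintro rfl
        exact hk (ih.mpr ⟨β, hβ, 0, rfl, by simp⟩)
      obtain ⟨γ', i, rfl⟩ := Finsupp.exists_eq_add_single_one hγ0
      have hγ' : γ'.degree ≤ k := by simpa [map_add] using hγ
      exact Or.inl ⟨⟨β + γ', ih.mpr ⟨β, hβ, γ', rfl, hγ'⟩, i, (add_assoc _ _ _).symm⟩, hk⟩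

lemma ind_le_iff {k : ℕ} {α : Fin n →₀ ℕ} (hα : ∃ β ∈ O, β ≤ α) :
    ind O α ≤ k ↔ ∃ β ∈ O, ∃ γ, α = β + γ ∧ γ.degree ≤ k := by
  obtain ⟨β, hβ, hβα⟩ := hα
  have hmem : α ∈ closedBorder O (α - β).degree :=
    mem_closedBorder_iff.mpr ⟨β, hβ, α - β, (add_tsub_cancel_of_le hβα).symm, le_rfl⟩
  rw [← mem_closedBorder_iff]
  exact ⟨fun h => closedBorder_mono h (Nat.sInf_mem (s := {k | α ∈ closedBorder O k}) ⟨_, hmem⟩),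
    fun h => Nat.sInf_le h⟩

lemma ind_eq_ind_add_degree_tsub {α u : Fin n →₀ ℕ} (hu : u ≤ α) (hOu : ∃ β ∈ O, β ≤ u)
    (hOα : ∀ β ∈ O, β ≤ α → β ≤ u) :
    ind O α = ind O u + (α - u).degree := by
  have hOα' : ∃ β ∈ O, β ≤ α := by
    obtain ⟨β, hβ, hβu⟩ := hOu
    exact ⟨β, hβ, hβu.trans hu⟩
  apply le_antisymm
  · obtain ⟨β, hβ, γ, rfl, hγ⟩ := (ind_le_iff hOu).mp le_rfl
    refine (ind_le_iff hOα').mpr ⟨β, hβ, γ + (α - (β + γ)), ?_, ?_⟩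
    · rw [← add_assoc, add_tsub_cancel_of_le hu]
    · simpa [map_add] using hγ
  · obtain ⟨β, hβ, γ, hαγ, hγ⟩ := (ind_le_iff hOα').mp le_rfl
    have hβu : β ≤ u := hOα β hβ (hαγ ▸ le_self_add)
    have hsplit : (u - β).degree + (α - u).degree = γ.degree := by
      rw [← map_add, add_comm, tsub_add_tsub_cancel hu hβu, hαγ, add_tsub_cancel_left]
    have hind : ind O u ≤ γ.degree - (α - u).degree :=
      (ind_le_iff hOu).mpr ⟨β, hβ, u - β, (add_tsub_cancel_of_le hβu).symm, by omega⟩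
    omega

end ClosedBorder

lemma coeff_seriesOfCoeff {n : ℕ} (f : (Fin n →₀ ℕ) → ℚ) (d : Fin n →₀ ℕ) :
    MvPowerSeries.coeff d (seriesOfCoeff f) = f d :=
  rfl

lemma IsOrderIdeal.zero_mem {n : ℕ} {O : Set (Fin n →₀ ℕ)} (hO : IsOrderIdeal O)
    (hne : O.Nonempty) : 0 ∈ O := by
  obtain ⟨α, hα⟩ := hne
  exact hO α hα 0 zero_le

lemma ind_eq_ind_inf_add {n : ℕ} {O : Set (Fin n →₀ ℕ)} (hO : IsOrderIdeal O)
    (hne : O.Nonempty) {M : Fin n →₀ ℕ} (hOM : ∀ β ∈ O, β ≤ M) (α : Fin n →₀ ℕ) :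
    ind O α = ind O (α ⊓ M) + (α - α ⊓ M).degree :=
  ind_eq_ind_add_degree_tsub inf_le_left ⟨0, hO.zero_mem hne, zero_le⟩
    fun β hβ hβα => le_inf hβα (hOM β hβ)

lemma tsub_mem_NS_iff_eq_inf {n : ℕ} {α u M : Fin n →₀ ℕ} (huα : u ≤ α) (huM : u ≤ M) :
    α - u ∈ NS {i | u i = M i} ↔ u = α ⊓ M := by
  simp only [NS, Set.mem_ofPred_eq, Finsupp.ext_iff, Finsupp.tsub_apply, Finsupp.inf_apply]
  refine forall_congr' fun i => ?_
  have := huα i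
  have := huM i
  omega

lemma coeff_monomial_mul_indicator_NS {n : ℕ} {u M : Fin n →₀ ℕ} (huM : u ≤ M)
    (g : (Fin n →₀ ℕ) → ℚ) (α : Fin n →₀ ℕ) :
    MvPowerSeries.coeff α (MvPowerSeries.monomial u 1 *
      seriesOfCoeff ((NS {i | u i = M i}).indicator g)) =
      if u = α ⊓ M then g (α - u) else 0 := by
  classical
  rw [MvPowerSeries.coeff_monomial_mul, one_mul]
  by_cases huα : u ≤ α
  · simp only [if_pos huα, coeff_seriesOfCoeff, Set.indicator_apply,
      tsub_mem_NS_iff_eq_inf huα huM]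
  · rw [if_neg huα, if_neg fun h => huα (by rw [h]; exact inf_le_left)]

theorem ind_genFun_formula_general (n : ℕ) (O : Set (Fin n →₀ ℕ))
    (hne : O.Nonempty) (hO : IsOrderIdeal O)
    (m : Fin n → ℕ) (hm : ∀ i, IsGreatest {a : ℕ | ∃ α ∈ O, α i = a} (m i))
    (M : Fin n →₀ ℕ) (hM : ∀ i, M i = m i + 1) :
    seriesOfCoeff (fun α => (ind O α : ℚ)) =
      ∑ u ∈ Finset.Iic M, MvPowerSeries.monomial u (1 : ℚ) *
        seriesOfCoeff ((NS {i : Fin n | u i = m i + 1}).indicator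
          fun β => (ind O u : ℚ) + (deg β : ℚ)) := by
  classical
  have hOM : ∀ β ∈ O, β ≤ M := fun β hβ i => by
    have := (hm i).2 ⟨β, hβ, rfl⟩
    have := hM i
    omega
  simp_rw [← hM]
  ext α
  rw [map_sum, Finset.sum_congr rfl fun u hu =>
      coeff_monomial_mul_indicator_NS (Finset.mem_Iic.mp hu) _ α,
    Finset.sum_ite_eq', if_pos (Finset.mem_Iic.mpr inf_le_right), coeff_seriesOfCoeff,
    ind_eq_ind_inf_add hO hne hOM α, deg_eq_degree, Nat.cast_add]

/-- Let `O ⊆ ℕ^n` be a finite nonempty order ideal with bounding box `B`, with extreme corner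
`(m₁,…,mₙ)`, `mᵢ = max{αᵢ : α ∈ O}`.  The closed border of `B` is
`∂̄B = {u : ∀ i, uᵢ ≤ mᵢ + 1}` (the points `u ≤ M` where `Mᵢ = mᵢ + 1`), and the free
directions at `u ∈ ∂̄B` are `f(u) = {i : uᵢ = mᵢ + 1}`.  Then
`Σ_α ind_O(α) y^α = Σ_{u ∈ ∂̄B} y^u · Σ_{β ∈ ℕ^{f(u)}} (ind_O(u) + |β|) y^β`. -/
theorem ind_genFun_formula (n : ℕ) (hn : 1 ≤ n) (O : Set (Fin n →₀ ℕ))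
    (hfin : O.Finite) (hne : O.Nonempty) (hO : IsOrderIdeal O)
    (m : Fin n → ℕ) (hm : ∀ i, IsGreatest {a : ℕ | ∃ α ∈ O, α i = a} (m i))
    (M : Fin n →₀ ℕ) (hM : ∀ i, M i = m i + 1) :
    seriesOfCoeff (fun α => (ind O α : ℚ)) =
      ∑ u ∈ Finset.Iic M, MvPowerSeries.monomial u (1 : ℚ) *
        seriesOfCoeff ((NS {i : Fin n | u i = m i + 1}).indicator
          fun β => (ind O u : ℚ) + (deg β : ℚ)) :=
  ind_genFun_formula_general n O hne hO m hm M hM
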